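/- Let S ⊆ [m] × [n] be a finite set and let i ∈ [m] with cols(i) ≠ ∅. Then E_i := { p ∈ [m] : cols(i) ⊆ cols(p) } × cols(i) is a maximal clique of S, i.e. E_i ∈ Max(S); moreover, for every maximal clique D ∈ Max(S) with i ∈ rows(D), one has rows(E_i) ⊆ rows(D). -/
import Mathlib


/-- A clique in `S ⊆ [m] × [n]` is a nonempty subset of `S` of the form `R × C`. -/
def IsCliqueIn {m n : ℕ} (S D : Finset (Fin m × Fin n)) : Prop :=
  D.Nonempty ∧ D ⊆ S ∧ ∃ (R : Finset (Fin m)) (C : Finset (Fin n)), D = R ×ˢ C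

/-- A maximal clique of `S`, i.e. an element of `Max(S)`. -/
def IsMaxCliqueIn {m n : ℕ} (S D : Finset (Fin m × Fin n)) : Prop :=
  IsCliqueIn S D ∧ ∀ E, IsCliqueIn S E → D ⊆ E → D = E

/-- The row set of a clique. -/
def rowsOf {m n : ℕ} (D : Finset (Fin m × Fin n)) : Finset (Fin m) := D.image Prod.fst

/-- `cols(i) = { j : (i,j) ∈ S }`. -/
def colsSet {m n : ℕ} (S : Finset (Fin m × Fin n)) (i : Fin m) : Finset (Fin n) :=
  (S.filter fun p => p.1 = i).image Prod.snd

lemma mem_colsSet {m n : ℕ} (S : Finset (Fin m × Fin n)) (i : Fin m) (j : Fin n) :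
    j ∈ colsSet S i ↔ (i, j) ∈ S := by
  simp only [colsSet, Finset.mem_image, Finset.mem_filter]
  constructor
  · rintro ⟨⟨a,b⟩, ⟨hS, rfl⟩, rfl⟩; exact hS
  · exact fun h => ⟨(i,j), ⟨h, rfl⟩, rfl⟩

/-- For `i ∈ [m]` with `cols(i) ≠ ∅`, the set
`E_i = { p : cols(i) ⊆ cols(p) } × cols(i)` is a maximal clique of `S`, and every maximal clique
`D` with `i ∈ rows(D)` satisfies `rows(E_i) ⊆ rows(D)`. -/
theorem stmt5 {m n : ℕ} (S : Finset (Fin m × Fin n)) (i : Fin m)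
    (hi : (colsSet S i).Nonempty) :
    IsMaxCliqueIn S
      ((Finset.univ.filter fun p : Fin m => colsSet S i ⊆ colsSet S p) ×ˢ colsSet S i) ∧
    ∀ D, IsMaxCliqueIn S D → i ∈ rowsOf D →
      rowsOf ((Finset.univ.filter fun p : Fin m => colsSet S i ⊆ colsSet S p) ×ˢ colsSet S i)
        ⊆ rowsOf D := by
  classical
  set F : Finset (Fin m) := Finset.univ.filter fun p : Fin m => colsSet S i ⊆ colsSet S p with hF
  have hiF : i ∈ F := by simp [hF]
  have hEsub : F ×ˢ colsSet S i ⊆ S := by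
    rintro ⟨p, j⟩ hpj
    rw [Finset.mem_product] at hpj
    have hp : colsSet S i ⊆ colsSet S p := by
      have := hpj.1; simp [hF] at this; exact this
    exact (mem_colsSet S p j).1 (hp hpj.2)
  have hclique : IsCliqueIn S (F ×ˢ colsSet S i) := by
    refine ⟨?_, hEsub, F, colsSet S i, rfl⟩
    obtain ⟨j, hj⟩ := hi
    exact ⟨(i, j), Finset.mem_product.2 ⟨hiF, hj⟩⟩
  constructor
  · refine ⟨hclique, ?_⟩
    rintro E ⟨hEne, hES, R, C, rfl⟩ hsub
    -- i ∈ R and colsSet S i ⊆ C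
    obtain ⟨j0, hj0⟩ := hi
    have hiR : i ∈ R := by
      have := hsub (show (i, j0) ∈ F ×ˢ colsSet S i from Finset.mem_product.2 ⟨hiF, hj0⟩)
      exact (Finset.mem_product.1 this).1
    have hCsub : C ⊆ colsSet S i := by
      intro j hj
      exact (mem_colsSet S i j).2 (hES (Finset.mem_product.2 ⟨hiR, hj⟩))
    have hcolsub : colsSet S i ⊆ C := by
      intro j hj
      have := hsub (show (i, j) ∈ F ×ˢ colsSet S i from Finset.mem_product.2 ⟨hiF, hj⟩)
      exact (Finset.mem_product.1 this).2
    have hCeq : C = colsSet S i := Finset.Subset.antisymm hCsub hcolsub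
    have hRsub : R ⊆ F := by
      intro p hp
      simp only [hF, Finset.mem_filter, Finset.mem_univ, true_and]
      intro j hj
      exact (mem_colsSet S p j).2 (hES (Finset.mem_product.2 ⟨hp, hCeq ▸ hj⟩))
    refine Finset.Subset.antisymm hsub ?_
    rw [hCeq]
    exact Finset.product_subset_product hRsub (Finset.Subset.refl _)
  · rintro D ⟨⟨hDne, hDS, R, C, rfl⟩, hmax⟩ hiD
    have hCne : C.Nonempty := by
      obtain ⟨⟨a,b⟩, hab⟩ := hDne
      exact ⟨b, (Finset.mem_product.1 hab).2⟩
    have hiR : i ∈ R := by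
      simp only [rowsOf, Finset.mem_image] at hiD
      obtain ⟨⟨a,b⟩, hab, rfl⟩ := hiD
      exact (Finset.mem_product.1 hab).1
    have hCsub : C ⊆ colsSet S i := fun j hj =>
      (mem_colsSet S i j).2 (hDS (Finset.mem_product.2 ⟨hiR, hj⟩))
    intro p hp
    simp only [rowsOf, Finset.mem_image] at hp ⊢
    obtain ⟨⟨a,b⟩, hab, rfl⟩ := hp
    have hpF : a ∈ F := (Finset.mem_product.1 hab).1
    have hpc : colsSet S i ⊆ colsSet S a := by
      simp [hF] at hpF; exact hpF
    -- enlarge D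
    have hE : IsCliqueIn S ((insert a R) ×ˢ C) := by
      refine ⟨?_, ?_, insert a R, C, rfl⟩
      · obtain ⟨j, hj⟩ := hCne
        exact ⟨(a, j), Finset.mem_product.2 ⟨Finset.mem_insert_self _ _, hj⟩⟩
      · rintro ⟨q, j⟩ hqj
        rw [Finset.mem_product] at hqj
        rcases Finset.mem_insert.1 hqj.1 with rfl | hq
        · exact (mem_colsSet S q j).1 (hpc (hCsub hqj.2))
        · exact hDS (Finset.mem_product.2 ⟨hq, hqj.2⟩)
    have heq := hmax _ hE
      (Finset.product_subset_product (Finset.subset_insert _ _) (Finset.Subset.refl _))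
    obtain ⟨j, hj⟩ := hCne
    have : (a, j) ∈ R ×ˢ C := by
      rw [heq]; exact Finset.mem_product.2 ⟨Finset.mem_insert_self _ _, hj⟩
    exact ⟨(a, j), this, rfl⟩
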